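/- arXiv:1609.06637 — 4 statements merged into one kernel-verified Lean document; each statement's English description precedes it below -/
import Mathlib

section
/- Every continuous map f from the n-disc Dⁿ to itself has a fixed point. -/
/-!
Milnor's analytic proof. If `f` had no fixed point, neither would a smooth approximation `q` of
it, and following the ray from `q x` through `x` until it meets the unit sphere gives a `C¹`
retraction `r` of a neighbourhood of the ball onto the sphere. For small `t` the maps
`x ↦ x + t • (r x - x)` are diffeomorphisms of the ball onto itself, so the integral of
`det (1 + t • (Dr - 1))` over the ball is its volume. This integral is a polynomial in `t`, so it
is the volume also at `t = 1`, where the integrand `det Dr` vanishes because `r` takes values in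
the sphere.
-/

open Metric Set Filter MeasureTheory Polynomial Topology
open scoped ContDiff Convolution RealInnerProductSpace

theorem injOn_add_of_norm_sub_le {E : Type*} [NormedAddCommGroup E] {g : E → E} {s : Set E}
    {c : ℝ} (hc : c < 1)
    (hg : ∀ x ∈ s, ∀ y ∈ s, ‖g y - g x‖ ≤ c * ‖y - x‖) : InjOn (fun x => x + g x) s := by
  intro x hx y hy hxy
  have hle : ‖y - x‖ ≤ c * ‖y - x‖ := calc
    ‖y - x‖ = ‖g x - g y‖ := by congr 1; linear_combination (norm := module) -hxy
    _ ≤ c * ‖x - y‖ := hg y hy x hx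
    _ = c * ‖y - x‖ := by rw [norm_sub_rev]
  have : ‖y - x‖ = 0 := by nlinarith [norm_nonneg (y - x)]
  exact (sub_eq_zero.1 (norm_eq_zero.1 this)).symm

section NormedSpace

variable {E : Type*} [NormedAddCommGroup E] [NormedSpace ℝ E]

structure IsC1SphereRetraction (U : Set E) (r : E → E) : Prop where
  isOpen : IsOpen U
  closedBall_subset : closedBall 0 1 ⊆ U
  contDiffOn : ContDiffOn ℝ 1 r U
  mapsTo : MapsTo r U (sphere 0 1)
  eqOn_sphere : EqOn r id (sphere 0 1)

theorem image_closedBall_eq_closedBall [ProperSpace E] {F : E → E}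
    (hF : ContinuousOn F (closedBall 0 1))
    (hmaps : MapsTo F (closedBall 0 1) (closedBall 0 1)) (hfix : EqOn F id (sphere 0 1))
    (hopen : IsOpen (F '' ball 0 1)) (h0 : F 0 ∈ ball (0 : E) 1) :
    F '' closedBall 0 1 = closedBall 0 1 := by
  have hclosed : IsClosed (F '' closedBall 0 1) :=
    ((isCompact_closedBall 0 1).image_of_continuousOn hF).isClosed
  -- Inside the open ball, the image of the closed ball is the image of the open ball, since the
  -- sphere is fixed; so it is clopen in the (connected) open ball.
  have hsub : ball 0 1 ∩ F '' closedBall 0 1 ⊆ F '' ball 0 1 := by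
    rintro _ ⟨hy, x, hx, rfl⟩
    refine ⟨x, ?_, rfl⟩
    rcases (mem_closedBall_zero_iff.1 hx).lt_or_eq with hx1 | hx1
    · exact mem_ball_zero_iff.2 hx1
    · rw [hfix (mem_sphere_zero_iff_norm.2 hx1)] at hy
      exact absurd hx1 (mem_ball_zero_iff.1 hy).ne
  have hball : ball (0 : E) 1 ⊆ F '' closedBall 0 1 := by
    by_contra hnot
    obtain ⟨y, hy, hyF⟩ := not_subset.1 hnot
    obtain ⟨z, -, hzF, hzF'⟩ := (convex_ball (0 : E) 1).isPreconnected _ _ hopen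
      hclosed.isOpen_compl (fun y hy => (em (y ∈ F '' closedBall 0 1)).imp
        (fun h => hsub ⟨hy, h⟩) id) ⟨F 0, h0, 0, mem_ball_self one_pos, rfl⟩ ⟨y, hy, hyF⟩
    exact hzF' (image_mono ball_subset_closedBall hzF)
  refine (hmaps.image_subset).antisymm ?_
  calc closedBall (0 : E) 1 = closure (ball 0 1) := (closure_ball 0 one_ne_zero).symm
    _ ⊆ F '' closedBall 0 1 := closure_minimal hball hclosed

theorem exists_continuous_extension_of_mapsTo_closedBall {f : E → E}
    (hf : ContinuousOn f (closedBall 0 1)) (hmaps : MapsTo f (closedBall 0 1) (closedBall 0 1)) :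
    ∃ F : E → E, Continuous F ∧ EqOn F f (closedBall 0 1) ∧ ∀ x, ‖F x‖ ≤ 1 := by
  set ρ : E → E := fun x => (max 1 ‖x‖)⁻¹ • x
  have hρ : ∀ x, ρ x ∈ closedBall 0 1 := fun x => by
    rw [mem_closedBall_zero_iff, norm_smul, norm_inv, Real.norm_of_nonneg (by positivity)]
    exact inv_mul_le_one_of_le₀ (le_max_right _ _) (by positivity)
  refine ⟨f ∘ ρ, hf.comp_continuous (((continuous_const.max continuous_norm).inv₀
    fun x => (lt_max_of_lt_left one_pos).ne').smul continuous_id) hρ, fun x hx => ?_,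
    fun x => mem_closedBall_zero_iff.1 (hmaps (hρ x))⟩
  simp [ρ, max_eq_left (mem_closedBall_zero_iff.1 hx)]

end NormedSpace

theorem exists_eval_eq_integral_eval {α : Type*} [MeasurableSpace α] (μ : Measure α)
    (p : α → ℝ[X]) (n : ℕ) (hdeg : ∀ x, (p x).natDegree ≤ n)
    (hint : ∀ t, Integrable (fun x => (p x).eval t) μ) :
    ∃ P : ℝ[X], ∀ t, P.eval t = ∫ x, (p x).eval t ∂μ := by
  classical
  -- Lagrange interpolation at the nodes `0, 1, …, n` writes `(p x).eval t` as a combination of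
  -- the values `(p x).eval i` whose coefficients do not depend on `x`.
  let v : Fin (n + 1) → ℝ := fun i => i
  have hv : InjOn v (Finset.univ : Finset (Fin (n + 1))) := fun i _ j _ h =>
    Fin.ext (by simpa [v] using h)
  have hinterp : ∀ (q : ℝ[X]), q.natDegree ≤ n → ∀ t, q.eval t =
      ∑ i, q.eval (v i) * (Lagrange.basis Finset.univ v i).eval t := fun q hq t => by
    have hq' : q.degree < (Finset.univ : Finset (Fin (n + 1))).card := by
      rw [Finset.card_univ, Fintype.card_fin]
      exact (degree_le_of_natDegree_le hq).trans_lt (by exact_mod_cast n.lt_succ_self)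
    conv_lhs => rw [Lagrange.eq_interpolate hv hq']
    simp [Lagrange.interpolate_apply, eval_finsetSum]
  refine ⟨Lagrange.interpolate Finset.univ v fun i => ∫ x, (p x).eval (v i) ∂μ, fun t => ?_⟩
  simp only [Lagrange.interpolate_apply, eval_finsetSum, eval_mul, eval_C]
  rw [integral_congr_ae (ae_of_all _ fun x => hinterp (p x) (hdeg x) t),
    integral_finsetSum _ fun i _ => (hint (v i)).mul_const _]
  simp only [integral_mul_const]

section FiniteDimensional

variable {E : Type*} [NormedAddCommGroup E] [NormedSpace ℝ E] [FiniteDimensional ℝ E]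

theorem ContinuousLinearMap.exists_natDegree_le_eval_eq_det_one_add_smul (L : E →L[ℝ] E) :
    ∃ p : ℝ[X], p.natDegree ≤ Module.finrank ℝ E ∧ ∀ t : ℝ, p.eval t = (1 + t • L).det := by
  classical
  let b := Module.finBasis ℝ E
  let A := LinearMap.toMatrix b b L
  refine ⟨((X : ℝ[X]) • A.map C + (1 : Matrix (Fin _) (Fin _) ℝ).map C).det, ?_, fun t => ?_⟩
  · simpa using natDegree_det_X_add_C_le A 1
  · rw [← coe_evalRingHom, RingHom.map_det, ContinuousLinearMap.det, ← LinearMap.det_toMatrix b]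
    congr 1
    ext i j
    simp only [map_zero, map_one, Matrix.map_one, RingHom.mapMatrix_apply, coe_evalRingHom,
      Matrix.map_apply, Matrix.add_apply, Matrix.smul_apply, smul_eq_mul, X_mul_C,
      Matrix.one_apply, eval_mul, eval_C, eval_X, ContinuousLinearMap.toLinearMap_add,
      ContinuousLinearMap.toLinearMap_one, ContinuousLinearMap.toLinearMap_smul, map_add,
      LinearMap.toMatrix_one, map_smul, A]
    ring

theorem exists_eval_eq_integral_det_one_add_smul {α : Type*} [MeasurableSpace α] (μ : Measure α)
    (G : α → E →L[ℝ] E) (hint : ∀ t : ℝ, Integrable (fun x => (1 + t • G x).det) μ) :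
    ∃ P : ℝ[X], ∀ t : ℝ, P.eval t = ∫ x, (1 + t • G x).det ∂μ := by
  choose p hdeg hp using fun x => (G x).exists_natDegree_le_eval_eq_det_one_add_smul
  obtain ⟨P, hP⟩ :=
    exists_eval_eq_integral_eval μ p _ hdeg fun t => by simpa only [hp] using hint t
  exact ⟨P, fun t => by simpa only [hp] using hP t⟩

theorem ContinuousLinearMap.det_one_add_ne_zero_of_norm_lt_one {L : E →L[ℝ] E} (h : ‖L‖ < 1) :
    (1 + L).det ≠ 0 := by
  have hu : IsUnit (1 + L) := by
    convert (Units.oneSub (-L) (by rwa [norm_neg])).isUnit using 1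
    simp [Units.oneSub]
  exact (LinearMap.isUnit_det _ (hu.map (toLinearMapRingHom (R₁ := ℝ) (M₁ := E)))).ne_zero

theorem ContinuousLinearMap.det_one_add_pos_of_norm_lt_one {L : E →L[ℝ] E} (h : ‖L‖ < 1) :
    0 < (1 + L).det := by
  -- `s ↦ det (1 + s • L)` is continuous, equals `1` at `0` and does not vanish on `[0, 1]`.
  by_contra! hneg
  have hcont : ContinuousOn (fun s : ℝ => (1 + s • L).det) (Icc 0 1) :=
    (continuous_det.comp (by fun_prop)).continuousOn
  have hdet_one : (1 : E →L[ℝ] E).det = 1 := LinearMap.det_id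
  obtain ⟨s, hs, hs0⟩ := intermediate_value_Icc' zero_le_one hcont
    ⟨by simpa using hneg, by simp [hdet_one]⟩
  refine det_one_add_ne_zero_of_norm_lt_one ?_ hs0
  calc ‖s • L‖ = s * ‖L‖ := by rw [norm_smul, Real.norm_of_nonneg hs.1]
    _ ≤ ‖L‖ := mul_le_of_le_one_left (norm_nonneg L) hs.2
    _ < 1 := h

theorem HasStrictFDerivAt.image_mem_nhds_of_det_ne_zero {f : E → E} {f' : E →L[ℝ] E} {x : E}
    (hf : HasStrictFDerivAt f f' x) (hdet : f'.det ≠ 0) {s : Set E} (hs : s ∈ 𝓝 x) :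
    f '' s ∈ 𝓝 (f x) := by
  rw [← f'.coe_toContinuousLinearEquivOfDetNeZero hdet] at hf
  rw [← hf.map_nhds_eq_of_equiv]
  exact image_mem_map hs

theorem HasStrictFDerivAt.det_eq_zero_of_mapsTo_sphere {f : E → E} {f' : E →L[ℝ] E} {x : E}
    (hf : HasStrictFDerivAt f f' x) {U : Set E} (hU : U ∈ 𝓝 x) {c : E} {R : ℝ} (hR : R ≠ 0)
    (hmaps : MapsTo f U (sphere c R)) : f'.det = 0 := by
  by_contra hdet
  have : f x ∈ interior (sphere c R) :=
    mem_interior_iff_mem_nhds.2 (mem_of_superset (hf.image_mem_nhds_of_det_ne_zero hdet hU)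
      hmaps.image_subset)
  simp [interior_sphere c hR] at this

section Measure

variable [MeasurableSpace E] [BorelSpace E] (μ : Measure E) [μ.IsAddHaarMeasure]

theorem integral_det_eq_measureReal_closedBall {F : E → E} {F' : E → E →L[ℝ] E}
    (hF : ∀ x ∈ closedBall (0 : E) 1, HasStrictFDerivAt F (F' x) x)
    (hdet : ∀ x ∈ closedBall (0 : E) 1, 0 < (F' x).det) (hinj : InjOn F (closedBall 0 1))
    (hmaps : MapsTo F (closedBall 0 1) (closedBall 0 1)) (hfix : EqOn F id (sphere 0 1))
    (h0 : F 0 ∈ ball (0 : E) 1) :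
    ∫ x in closedBall 0 1, (F' x).det ∂μ = μ.real (closedBall 0 1) := by
  have hopen : IsOpen (F '' ball 0 1) := isOpen_iff_mem_nhds.2 <| forall_mem_image.2 fun x hx =>
    (hF x (ball_subset_closedBall hx)).image_mem_nhds_of_det_ne_zero
      (hdet x (ball_subset_closedBall hx)).ne' (isOpen_ball.mem_nhds hx)
  have himage : F '' closedBall 0 1 = closedBall 0 1 := image_closedBall_eq_closedBall
    (fun x hx => (hF x hx).continuousAt.continuousWithinAt) hmaps hfix hopen h0
  have hcov := integral_image_eq_integral_abs_det_fderiv_smul μ measurableSet_closedBall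
    (fun x hx => (hF x hx).hasFDerivAt.hasFDerivWithinAt) hinj fun _ => (1 : ℝ)
  rw [himage, setIntegral_const, smul_eq_mul, mul_one] at hcov
  rw [hcov]
  refine setIntegral_congr_fun measurableSet_closedBall fun x hx => ?_
  simp [abs_of_pos (hdet x hx)]

theorem exists_pos_forall_integral_det_one_add_smul_eq {r : E → E} {U : Set E} (hU : IsOpen U)
    (hDU : closedBall 0 1 ⊆ U) (hr : ContDiffOn ℝ 1 r U)
    (hmaps : MapsTo r (closedBall 0 1) (closedBall 0 1)) (hfix : EqOn r id (sphere 0 1)) :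
    ∃ t₀ > (0 : ℝ), ∀ t ∈ Ico 0 t₀, ∫ x in closedBall 0 1, (1 + t • (fderiv ℝ r x - 1)).det ∂μ =
      μ.real (closedBall 0 1) := by
  have hr' : ∀ x ∈ closedBall (0 : E) 1, HasStrictFDerivAt r (fderiv ℝ r x) x := fun x hx =>
    (hr.contDiffAt (hU.mem_nhds (hDU hx))).hasStrictFDerivAt one_ne_zero
  obtain ⟨C, hC⟩ := (isCompact_closedBall (0 : E) 1).exists_bound_of_continuousOn
    (((hr.continuousOn_fderiv_of_isOpen hU le_rfl).mono hDU).sub continuousOn_const)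
  have hC0 : 0 ≤ C := (norm_nonneg _).trans (hC 0 (mem_closedBall_self zero_le_one))
  have hlip : ∀ x ∈ closedBall (0 : E) 1, ∀ y ∈ closedBall (0 : E) 1,
      ‖(r y - y) - (r x - x)‖ ≤ C * ‖y - x‖ := fun x hx y hy =>
    (convex_closedBall 0 1).norm_image_sub_le_of_norm_hasFDerivWithin_le
      (fun z hz => ((hr' z hz).hasFDerivAt.sub (hasFDerivAt_id z)).hasFDerivWithinAt) hC hx hy
  refine ⟨(C + 1)⁻¹, by positivity, fun t ⟨ht0, ht⟩ => ?_⟩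
  have htC : t * C < 1 ∧ t < 1 := by
    have h1 : t * (C + 1) < 1 := by rwa [← lt_div_iff₀ (by positivity), one_div]
    constructor <;> nlinarith
  have hnorm : ∀ x ∈ closedBall (0 : E) 1, ‖t • (fderiv ℝ r x - 1)‖ < 1 := fun x hx =>
    calc ‖t • (fderiv ℝ r x - 1)‖ ≤ t * C := by
          rw [norm_smul, Real.norm_of_nonneg ht0]; exact mul_le_mul_of_nonneg_left (hC x hx) ht0
      _ < 1 := htC.1
  refine integral_det_eq_measureReal_closedBall μ (F := fun x => x + t • (r x - x))
    (fun x hx => ?_)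
    (fun x hx => ContinuousLinearMap.det_one_add_pos_of_norm_lt_one (hnorm x hx))
    (fun x hx y hy hxy => ?_) (fun x hx => ?_) (fun x hx => ?_) ?_
  · exact (hasStrictFDerivAt_id x).add (((hr' x hx).sub (hasStrictFDerivAt_id x)).const_smul t)
  · refine injOn_add_of_norm_sub_le (g := fun x => t • (r x - x)) htC.1 (fun x hx y hy => ?_)
      hx hy hxy
    calc ‖t • (r y - y) - t • (r x - x)‖ = t * ‖(r y - y) - (r x - x)‖ := by
          rw [← smul_sub, norm_smul, Real.norm_of_nonneg ht0]
      _ ≤ t * C * ‖y - x‖ := by rw [mul_assoc]; exact mul_le_mul_of_nonneg_left (hlip x hx y hy) ht0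
  · have : x + t • (r x - x) = (1 - t) • x + t • r x := by module
    simp only [this]
    exact convex_closedBall 0 1 hx (hmaps hx) (by linarith [htC.2]) ht0 (by ring)
  · simp [hfix hx]
  · have hr0 : ‖r 0‖ ≤ 1 := mem_closedBall_zero_iff.1 (hmaps (mem_closedBall_self zero_le_one))
    simpa [norm_smul, Real.norm_of_nonneg ht0] using (mul_le_of_le_one_right ht0 hr0).trans_lt htC.2

end Measure

theorem not_isC1SphereRetraction (U : Set E) (r : E → E) : ¬ IsC1SphereRetraction U r := by
  intro hr
  borelize E
  let μ : Measure E := Measure.addHaar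
  have hr' : ∀ x ∈ U, HasStrictFDerivAt r (fderiv ℝ r x) x := fun x hx =>
    (hr.contDiffOn.contDiffAt (hr.isOpen.mem_nhds hx)).hasStrictFDerivAt one_ne_zero
  obtain ⟨t₀, ht₀, hvol⟩ := exists_pos_forall_integral_det_one_add_smul_eq μ hr.isOpen
    hr.closedBall_subset hr.contDiffOn
    ((hr.mapsTo.mono_left hr.closedBall_subset).mono_right sphere_subset_closedBall) hr.eqOn_sphere
  have hG : ContinuousOn (fun x => fderiv ℝ r x - 1) (closedBall 0 1) :=
    ((hr.contDiffOn.continuousOn_fderiv_of_isOpen hr.isOpen le_rfl).mono hr.closedBall_subset).sub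
      continuousOn_const
  obtain ⟨P, hP⟩ := exists_eval_eq_integral_det_one_add_smul (μ.restrict (closedBall 0 1))
    (fun x => fderiv ℝ r x - 1) fun t =>
      (ContinuousLinearMap.continuous_det.comp_continuousOn
        (continuousOn_const.add (hG.const_smul t))).integrableOn_compact (isCompact_closedBall 0 1)
  -- `P` is constant on `[0, t₀)`, hence everywhere.
  have hPconst : P = C (μ.real (closedBall 0 1)) := eq_of_infinite_eval_eq _ _
    ((Ico_infinite ht₀).mono fun t ht => by simp [hP, hvol t ht])
  have hdet : ∀ x ∈ closedBall (0 : E) 1, (1 + (1 : ℝ) • (fderiv ℝ r x - 1)).det = 0 :=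
    fun x hx => by
      rw [one_smul, add_sub_cancel]
      exact (hr' x (hr.closedBall_subset hx)).det_eq_zero_of_mapsTo_sphere
        (hr.isOpen.mem_nhds (hr.closedBall_subset hx)) one_ne_zero hr.mapsTo
  have h1 := hP 1
  rw [hPconst, eval_C, setIntegral_congr_fun measurableSet_closedBall hdet, integral_zero] at h1
  exact (ENNReal.toReal_pos (measure_closedBall_pos μ 0 one_pos).ne'
    measure_closedBall_lt_top.ne).ne' h1

theorem exists_contDiff_dist_le_of_continuous {F : Type*} [NormedAddCommGroup F]
    [NormedSpace ℝ F] [CompleteSpace F] {f : E → F} (hf : Continuous f) {K : Set E}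
    (hK : IsCompact K) {ε : ℝ} (hε : 0 < ε) :
    ∃ g : E → F, ContDiff ℝ ∞ g ∧ ∀ x ∈ K, dist (g x) (f x) ≤ ε := by
  borelize E
  obtain ⟨δ, hδ, hfδ⟩ := Metric.uniformContinuousOn_iff.1
    ((hK.cthickening (r := 1)).uniformContinuousOn_of_continuous hf.continuousOn) ε hε
  let φ : ContDiffBump (0 : E) :=
    ⟨min δ 1 / 2, min δ 1, by positivity, half_lt_self (by positivity)⟩
  refine ⟨φ.normed Measure.addHaar ⋆[ContinuousLinearMap.lsmul ℝ ℝ, Measure.addHaar] f,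
    φ.hasCompactSupport_normed.contDiff_convolution_left _ φ.contDiff_normed hf.locallyIntegrable,
    fun x hx => φ.dist_normed_convolution_le hf.aestronglyMeasurable fun y hy => ?_⟩
  have hxy : dist y x < min δ 1 := hy
  refine (hfδ y ?_ x (self_subset_cthickening K hx) (hxy.trans_le (min_le_left _ _))).le
  exact mem_cthickening_of_dist_le y x 1 K hx ((hxy.trans_le (min_le_right _ _)).le)

theorem exists_contDiff_fixedPointFree_of_fixedPointFree {f : E → E}
    (hf : ContinuousOn f (closedBall 0 1)) (hmaps : MapsTo f (closedBall 0 1) (closedBall 0 1))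
    (hfree : ∀ x ∈ closedBall (0 : E) 1, f x ≠ x) :
    ∃ q : E → E, ContDiff ℝ ∞ q ∧ MapsTo q (closedBall 0 1) (closedBall 0 1) ∧
      ∀ x ∈ closedBall (0 : E) 1, q x ≠ x := by
  obtain ⟨x₀, hx₀, hmin⟩ := (isCompact_closedBall (0 : E) 1).exists_isMinOn
    (nonempty_closedBall.2 zero_le_one) (hf.sub continuousOn_id).norm
  set ε := ‖f x₀ - x₀‖
  have hε : 0 < ε := norm_pos_iff.2 (sub_ne_zero.2 (hfree x₀ hx₀))
  obtain ⟨F, hF, hFf, hF1⟩ := exists_continuous_extension_of_mapsTo_closedBall hf hmaps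
  -- Shrink `F` by `1 - δ` so that a `δ`-approximation still maps the ball into itself.
  set δ := min (ε / 3) 1
  have hδ : 0 < δ := by positivity
  obtain ⟨q, hq, hqF⟩ := exists_contDiff_dist_le_of_continuous (hF.const_smul (1 - δ))
    (isCompact_closedBall 0 1) hδ
  have hshrink : ∀ x, ‖(1 - δ) • F x‖ ≤ 1 - δ := fun x => by
    rw [norm_smul, Real.norm_of_nonneg (sub_nonneg.2 (min_le_right _ _))]
    exact mul_le_of_le_one_right (sub_nonneg.2 (min_le_right _ _)) (hF1 x)
  refine ⟨q, hq, fun x hx => ?_, fun x hx hqx => ?_⟩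
  · rw [mem_closedBall_zero_iff]
    calc ‖q x‖ ≤ ‖(1 - δ) • F x‖ + dist (q x) ((1 - δ) • F x) := by
          rw [dist_eq_norm]; exact norm_le_norm_add_norm_sub' _ _
      _ ≤ (1 - δ) + δ := add_le_add (hshrink x) (hqF x hx)
      _ = 1 := by ring
  · have hfF : dist (f x) ((1 - δ) • F x) ≤ δ := by
      rw [hFf hx, dist_eq_norm, sub_smul, one_smul, sub_sub_cancel, norm_smul,
        Real.norm_of_nonneg hδ.le]
      exact mul_le_of_le_one_right hδ.le (mem_closedBall_zero_iff.1 (hmaps hx))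
    have := calc ε ≤ dist (f x) (q x) := by rw [hqx, dist_eq_norm]; exact hmin hx
      _ ≤ dist (f x) ((1 - δ) • F x) + dist (q x) ((1 - δ) • F x) := by
        rw [dist_comm (q x)]; exact dist_triangle _ _ _
      _ ≤ δ + δ := add_le_add hfF (hqF x hx)
    linarith [min_le_left (ε / 3) 1]

end FiniteDimensional

section InnerProductSpace

variable {E : Type*} [NormedAddCommGroup E] [InnerProductSpace ℝ E]

theorem inner_sub_pos_of_norm_le {x y : E} (h : ‖y‖ ≤ ‖x‖) (hne : x ≠ y) : 0 < ⟪x, x - y⟫ := by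
  have h1 : ‖x - y‖ ^ 2 = ‖x‖ ^ 2 - 2 * ⟪x, y⟫ + ‖y‖ ^ 2 := norm_sub_sq_real x y
  have h2 : ⟪x, x - y⟫ = ‖x‖ ^ 2 - ⟪x, y⟫ := by
    rw [inner_sub_right, real_inner_self_eq_norm_sq]
  have h3 : 0 < ‖x - y‖ := norm_pos_iff.2 (sub_ne_zero.2 hne)
  nlinarith [norm_nonneg y]

-- The coefficient of `u` is the larger root `τ` of `‖x + τ • u‖ = 1` when `‖u‖ = 1`.
noncomputable def rayToSphere (x u : E) : E := x + (√(⟪x, u⟫ ^ 2 + 1 - ‖x‖ ^ 2) - ⟪x, u⟫) • u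

theorem norm_rayToSphere {x u : E} (hu : ‖u‖ = 1) (hd : 0 ≤ ⟪x, u⟫ ^ 2 + 1 - ‖x‖ ^ 2) :
    ‖rayToSphere x u‖ = 1 := by
  have hsq := Real.sq_sqrt hd
  have : ‖rayToSphere x u‖ ^ 2 = 1 := by
    rw [rayToSphere, norm_add_sq_real, norm_smul, real_inner_smul_right, hu, mul_one,
      Real.norm_eq_abs, sq_abs]
    linear_combination hsq
  exact (pow_left_inj₀ (norm_nonneg _) zero_le_one two_ne_zero).1 (this.trans (one_pow 2).symm)

theorem rayToSphere_eq_self {x u : E} (hx : ‖x‖ = 1) (h : 0 ≤ ⟪x, u⟫) : rayToSphere x u = x := by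
  simp [rayToSphere, hx, Real.sqrt_sq h]

theorem ContDiffAt.rayToSphere {n : WithTop ℕ∞} {f g : E → E} {x : E} (hf : ContDiffAt ℝ n f x)
    (hg : ContDiffAt ℝ n g x) (hd : 0 < ⟪f x, g x⟫ ^ 2 + 1 - ‖f x‖ ^ 2) :
    ContDiffAt ℝ n (fun y => _root_.rayToSphere (f y) (g y)) x := by
  have hinner : ContDiffAt ℝ n (fun y => ⟪f y, g y⟫) x := hf.inner ℝ hg
  have hd' : ContDiffAt ℝ n (fun y => ⟪f y, g y⟫ ^ 2 + 1 - ‖f y‖ ^ 2) x :=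
    ((hinner.pow 2).add contDiffAt_const).sub (hf.norm_sq ℝ)
  exact hf.add (((hd'.sqrt hd.ne').sub hinner).smul hg)

theorem exists_isC1SphereRetraction_of_fixedPointFree {q : E → E} (hq : ContDiff ℝ 1 q)
    (hmaps : MapsTo q (closedBall 0 1) (closedBall 0 1))
    (hfree : ∀ x ∈ closedBall (0 : E) 1, q x ≠ x) :
    ∃ (U : Set E) (r : E → E), IsC1SphereRetraction U r := by
  -- Send `x` to the point where the ray from `q x` through `x` leaves the ball.
  set u : E → E := fun x => ‖x - q x‖⁻¹ • (x - q x)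
  set disc : E → ℝ := fun x => ⟪x, u x⟫ ^ 2 + 1 - ‖x‖ ^ 2
  set V : Set E := {x | x ≠ q x}
  have hV : IsOpen V := isOpen_ne_fun continuous_id hq.continuous
  have hu : ∀ x ∈ V, ContDiffAt ℝ 1 u x := fun x hx =>
    have hw : ContDiffAt ℝ 1 (fun y => y - q y) x := contDiffAt_id.sub hq.contDiffAt
    ((hw.norm ℝ (sub_ne_zero.2 hx)).inv (norm_ne_zero_iff.2 (sub_ne_zero.2 hx))).smul hw
  have hunorm : ∀ x ∈ V, ‖u x‖ = 1 := fun x hx => norm_smul_inv_norm (sub_ne_zero.2 hx)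
  have hdisc : ContinuousOn disc V := fun x hx =>
    ((((contDiffAt_id.inner ℝ (hu x hx)).pow 2).add contDiffAt_const).sub
      (contDiffAt_id.norm_sq ℝ)).continuousAt.continuousWithinAt
  have hsphere : ∀ x ∈ sphere (0 : E) 1, 0 < ⟪x, u x⟫ := fun x hx => by
    have hx1 : ‖x‖ = 1 := mem_sphere_zero_iff_norm.1 hx
    have hxD : x ∈ closedBall (0 : E) 1 := sphere_subset_closedBall hx
    rw [real_inner_smul_right]
    exact mul_pos (inv_pos.2 (norm_pos_iff.2 (sub_ne_zero.2 (hfree x hxD).symm)))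
      (inner_sub_pos_of_norm_le (hx1 ▸ mem_closedBall_zero_iff.1 (hmaps hxD)) (hfree x hxD).symm)
  refine ⟨V ∩ disc ⁻¹' Ioi 0, fun x => rayToSphere x (u x),
    ⟨hdisc.isOpen_inter_preimage hV isOpen_Ioi, fun x hx => ⟨(hfree x hx).symm, ?_⟩,
    fun x hx => (contDiffAt_id.rayToSphere (hu x hx.1) hx.2).contDiffWithinAt,
    fun x hx => mem_sphere_zero_iff_norm.2 (norm_rayToSphere (hunorm x hx.1) hx.2.le),
    fun x hx => ?_⟩⟩
  · show 0 < ⟪x, u x⟫ ^ 2 + 1 - ‖x‖ ^ 2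
    rcases (mem_closedBall_zero_iff.1 hx).lt_or_eq with hx1 | hx1
    · nlinarith [sq_nonneg ⟪x, u x⟫, norm_nonneg x]
    · rw [hx1]
      nlinarith [hsphere x (mem_sphere_zero_iff_norm.2 hx1)]
  · exact rayToSphere_eq_self (mem_sphere_zero_iff_norm.1 hx) (hsphere x hx).le

end InnerProductSpace

theorem brouwer_fixed_point (n : ℕ)
    (f : EuclideanSpace ℝ (Fin n) → EuclideanSpace ℝ (Fin n))
    (hf : ContinuousOn f (Metric.closedBall 0 1))
    (hmaps : Set.MapsTo f (Metric.closedBall 0 1) (Metric.closedBall 0 1)) :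
    ∃ x ∈ Metric.closedBall (0 : EuclideanSpace ℝ (Fin n)) 1, f x = x := by
  by_contra! hfree
  obtain ⟨q, hq, hqmaps, hqfree⟩ := exists_contDiff_fixedPointFree_of_fixedPointFree hf hmaps hfree
  obtain ⟨U, r, hr⟩ :=
    exists_isC1SphereRetraction_of_fixedPointFree (hq.of_le (by norm_cast)) hqmaps hqfree
  exact not_isC1SphereRetraction U r hr
end

section
/- Neither of the graded ℚ-algebras ℚ[x,y]/(x² - y², x³, y³) and ℚ[x,y]/(x² + y², x³, y³) (x, y of degree 2) embeds as a graded subalgebra of the other; consequently neither of ℂP² # ℂP² and ℂP² # (−ℂP²) dominates the other. -/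
/-!
Neither of the graded `ℚ`-algebras `ℚ[x,y]/(x² - y², x³, y³)` and
`ℚ[x,y]/(x² + y², x³, y³)` (with `x, y` of degree 2) embeds as a graded subalgebra of
the other; consequently neither of `ℂP² # ℂP²` and `ℂP² # (−ℂP²)` dominates the other.

These are the rational cohomology rings of the connected sums of two copies of `ℂP²`
with equal, respectively opposite, orientations.  A graded embedding is formalized as an
injective `ℚ`-algebra homomorphism mapping the degree-2 part (the `ℚ`-span of `{x, y}`)
into the degree-2 part.
-/

open MvPolynomial

/-- `H^*(ℂP² # ℂP²; ℚ) = ℚ[x,y]/(x² - y², x³, y³)`, with `x, y` of degree 2. -/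
noncomputable abbrev CohomSum : Type :=
  MvPolynomial (Fin 2) ℚ ⧸
    (Ideal.span {(X 0 : MvPolynomial (Fin 2) ℚ) ^ 2 - (X 1 : MvPolynomial (Fin 2) ℚ) ^ 2,
      (X 0 : MvPolynomial (Fin 2) ℚ) ^ 3, (X 1 : MvPolynomial (Fin 2) ℚ) ^ 3})

noncomputable def xA : CohomSum := Ideal.Quotient.mk _ (X 0)
noncomputable def yA : CohomSum := Ideal.Quotient.mk _ (X 1)

/-- `H^*(ℂP² # (−ℂP²); ℚ) = ℚ[x,y]/(x² + y², x³, y³)`, with `x, y` of degree 2. -/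
noncomputable abbrev CohomDiff : Type :=
  MvPolynomial (Fin 2) ℚ ⧸
    (Ideal.span {(X 0 : MvPolynomial (Fin 2) ℚ) ^ 2 + (X 1 : MvPolynomial (Fin 2) ℚ) ^ 2,
      (X 0 : MvPolynomial (Fin 2) ℚ) ^ 3, (X 1 : MvPolynomial (Fin 2) ℚ) ^ 3})

noncomputable def xB : CohomDiff := Ideal.Quotient.mk _ (X 0)
noncomputable def yB : CohomDiff := Ideal.Quotient.mk _ (X 1)

/-!
Write degree-two classes as `ξ = a x + b y`, `η = c x + d y` with rational coefficients.
In `ℚ[x,y]/(x² + y², x³, y³)` the evaluation `x ↦ t`, `y ↦ i t` into `ℂ[t]/(t³)` sends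
`ξ η` to `(a + b i)(c + d i) t²`; since `x² + y²` has no nonzero rational zero, a product of
two nonzero degree-two classes is nonzero there. In `ℚ[x,y]/(x² - y², x³, y³)` however
`(x - y)(x + y) = 0` with `x ± y ≠ 0`, so no graded embedding goes in that direction.
In the other direction, the evaluations `x ↦ t`, `y ↦ ±t` into `ℚ[t]/(t³)` turn
`ξ² + η² = 0` into `(a ± b)² + (c ± d)² = 0`, forcing `ξ = 0`; but `x² + y² = 0` in the
source while `x ≠ 0`.
-/

theorem AdjoinRoot.root_X_pow_pow_eq_zero (K : Type*) [CommRing K] (n : ℕ) :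
    root (Polynomial.X ^ n : Polynomial K) ^ n = 0 := by
  rw [← mk_X, ← map_pow, mk_eq_zero]

theorem AdjoinRoot.root_X_pow_pow_ne_zero (K : Type*) [CommRing K] [IsDomain K] {n k : ℕ}
    (hk : k < n) : root (Polynomial.X ^ n : Polynomial K) ^ k ≠ 0 := by
  rw [← mk_X, ← map_pow, Ne, mk_eq_zero,
    pow_dvd_pow_iff Polynomial.X_ne_zero Polynomial.not_isUnit_X]
  exact hk.not_ge

theorem AdjoinRoot.root_X_pow_ne_zero (K : Type*) [CommRing K] [IsDomain K] {n : ℕ}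
    (hn : 1 < n) : root (Polynomial.X ^ n : Polynomial K) ≠ 0 := by
  simpa using root_X_pow_pow_ne_zero K hn

theorem CohomSum.xA_sq_sub_yA_sq : xA ^ 2 - yA ^ 2 = 0 := by
  rw [xA, yA, ← map_pow, ← map_pow, ← map_sub, Ideal.Quotient.eq_zero_iff_mem]
  exact Ideal.subset_span (Set.mem_insert _ _)

theorem CohomDiff.xB_sq_add_yB_sq : xB ^ 2 + yB ^ 2 = 0 := by
  rw [xB, yB, ← map_pow, ← map_pow, ← map_add, Ideal.Quotient.eq_zero_iff_mem]
  exact Ideal.subset_span (Set.mem_insert _ _)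

section Lift

variable {R : Type*} [CommRing R] [Algebra ℚ R]

noncomputable def CohomSum.lift (p q : R) (hpq : p ^ 2 = q ^ 2) (hp : p ^ 3 = 0)
    (hq : q ^ 3 = 0) : CohomSum →ₐ[ℚ] R :=
  Ideal.Quotient.liftₐ _ (aeval ![p, q]) fun _ ha => by
    refine (Ideal.span_le (I := RingHom.ker (aeval ![p, q])) |>.2 ?_) ha
    rintro _ (rfl | rfl | rfl) <;> simp [hpq, hp, hq]

@[simp]
theorem CohomSum.lift_xA (p q : R) (hpq hp hq) : CohomSum.lift p q hpq hp hq xA = p :=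
  aeval_X ![p, q] 0

@[simp]
theorem CohomSum.lift_yA (p q : R) (hpq hp hq) : CohomSum.lift p q hpq hp hq yA = q :=
  aeval_X ![p, q] 1

noncomputable def CohomDiff.lift (p q : R) (hpq : p ^ 2 + q ^ 2 = 0) (hp : p ^ 3 = 0)
    (hq : q ^ 3 = 0) : CohomDiff →ₐ[ℚ] R :=
  Ideal.Quotient.liftₐ _ (aeval ![p, q]) fun _ ha => by
    refine (Ideal.span_le (I := RingHom.ker (aeval ![p, q])) |>.2 ?_) ha
    rintro _ (rfl | rfl | rfl) <;> simp [hpq, hp, hq]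

@[simp]
theorem CohomDiff.lift_xB (p q : R) (hpq hp hq) : CohomDiff.lift p q hpq hp hq xB = p :=
  aeval_X ![p, q] 0

@[simp]
theorem CohomDiff.lift_yB (p q : R) (hpq hp hq) : CohomDiff.lift p q hpq hp hq yB = q :=
  aeval_X ![p, q] 1

end Lift

section Evaluation

open AdjoinRoot
open scoped Polynomial

noncomputable def CohomSum.evalRoot (ε : ℚ) (hε : ε ^ 2 = 1) :
    CohomSum →ₐ[ℚ] AdjoinRoot (Polynomial.X ^ 3 : ℚ[X]) :=
  CohomSum.lift (root _) (ε • root _) (by rw [smul_pow, hε, one_smul])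
    (root_X_pow_pow_eq_zero ℚ 3) (by rw [smul_pow, root_X_pow_pow_eq_zero, smul_zero])

theorem CohomSum.evalRoot_smul_add_smul (ε : ℚ) (hε : ε ^ 2 = 1) (a b : ℚ) :
    CohomSum.evalRoot ε hε (a • xA + b • yA) =
      (a + ε * b) • root (Polynomial.X ^ 3 : ℚ[X]) := by
  simp [CohomSum.evalRoot, add_smul, smul_smul, mul_comm]

noncomputable def CohomDiff.evalRoot :
    CohomDiff →ₐ[ℚ] AdjoinRoot (Polynomial.X ^ 3 : ℂ[X]) :=
  CohomDiff.lift (root _) (Complex.I • root _)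
    (by rw [smul_pow, Complex.I_sq, neg_one_smul, add_neg_cancel])
    (root_X_pow_pow_eq_zero ℂ 3) (by rw [smul_pow, root_X_pow_pow_eq_zero, smul_zero])

theorem CohomDiff.evalRoot_smul_add_smul (a b : ℚ) :
    CohomDiff.evalRoot (a • xB + b • yB) =
      (a + b * Complex.I) • root (Polynomial.X ^ 3 : ℂ[X]) := by
  simp [CohomDiff.evalRoot, ← Rat.cast_smul_eq_qsmul ℂ, add_smul, smul_smul]

theorem CohomSum.linearIndependent_xA_yA : LinearIndependent ℚ ![xA, yA] := by
  refine LinearIndependent.pair_iff.2 fun a b h => ?_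
  have key (ε : ℚ) (hε : ε ^ 2 = 1) : a + ε * b = 0 := by
    have h' := congrArg (CohomSum.evalRoot ε hε) h
    rwa [CohomSum.evalRoot_smul_add_smul, map_zero, smul_eq_zero,
      or_iff_left (root_X_pow_ne_zero ℚ (by norm_num))] at h'
  have h₁ := key 1 (one_pow 2)
  have h₂ := key (-1) (by norm_num)
  constructor <;> linarith

theorem CohomSum.xA_sub_yA_ne_zero : xA - yA ≠ 0 := fun h => by
  simpa using LinearIndependent.pair_iff.1 CohomSum.linearIndependent_xA_yA 1 (-1)
    (by simpa [← sub_eq_add_neg] using h)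

theorem CohomSum.xA_add_yA_ne_zero : xA + yA ≠ 0 := fun h => by
  simpa using LinearIndependent.pair_iff.1 CohomSum.linearIndependent_xA_yA 1 1 (by simpa using h)

theorem CohomSum.eq_zero_of_sq_add_sq_eq_zero {ξ η : CohomSum}
    (hξ : ξ ∈ Submodule.span ℚ {xA, yA}) (hη : η ∈ Submodule.span ℚ {xA, yA})
    (h : ξ ^ 2 + η ^ 2 = 0) : ξ = 0 := by
  obtain ⟨a, b, rfl⟩ := Submodule.mem_span_pair.1 hξ
  obtain ⟨c, d, rfl⟩ := Submodule.mem_span_pair.1 hη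
  have key (ε : ℚ) (hε : ε ^ 2 = 1) : a + ε * b = 0 := by
    have h' := congrArg (CohomSum.evalRoot ε hε) h
    rw [map_add, map_pow, map_pow, CohomSum.evalRoot_smul_add_smul,
      CohomSum.evalRoot_smul_add_smul, smul_pow, smul_pow, ← add_smul, map_zero, smul_eq_zero,
      or_iff_left (root_X_pow_pow_ne_zero ℚ (by norm_num)),
      add_eq_zero_iff_of_nonneg (sq_nonneg _) (sq_nonneg _)] at h'
    exact pow_eq_zero_iff two_ne_zero |>.1 h'.1
  have h₁ := key 1 (one_pow 2)
  have h₂ := key (-1) (by norm_num)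
  obtain ⟨rfl, rfl⟩ : a = 0 ∧ b = 0 := by constructor <;> linarith
  simp

theorem CohomDiff.xB_ne_zero : xB ≠ 0 := fun h => by
  have h' := congrArg CohomDiff.evalRoot h
  rw [CohomDiff.evalRoot, CohomDiff.lift_xB, map_zero] at h'
  exact root_X_pow_ne_zero ℂ (by norm_num) h'

theorem CohomDiff.eq_zero_or_eq_zero_of_mul_eq_zero {ξ η : CohomDiff}
    (hξ : ξ ∈ Submodule.span ℚ {xB, yB}) (hη : η ∈ Submodule.span ℚ {xB, yB})
    (h : ξ * η = 0) : ξ = 0 ∨ η = 0 := by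
  obtain ⟨a, b, rfl⟩ := Submodule.mem_span_pair.1 hξ
  obtain ⟨c, d, rfl⟩ := Submodule.mem_span_pair.1 hη
  have h' := congrArg CohomDiff.evalRoot h
  rw [map_mul, CohomDiff.evalRoot_smul_add_smul, CohomDiff.evalRoot_smul_add_smul,
    smul_mul_smul_comm, ← sq, map_zero, smul_eq_zero,
    or_iff_left (root_X_pow_pow_ne_zero ℂ (by norm_num)), mul_eq_zero] at h'
  refine h'.imp (fun h => ?_) (fun h => ?_) <;>
    · obtain ⟨rfl, rfl⟩ := by simpa [Complex.ext_iff] using h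
      simp

end Evaluation

theorem no_graded_embedding_connected_sums :
    (¬ ∃ ψ : CohomSum →ₐ[ℚ] CohomDiff, Function.Injective ψ ∧
        ψ xA ∈ Submodule.span ℚ ({xB, yB} : Set CohomDiff) ∧
        ψ yA ∈ Submodule.span ℚ ({xB, yB} : Set CohomDiff)) ∧
    (¬ ∃ ψ : CohomDiff →ₐ[ℚ] CohomSum, Function.Injective ψ ∧
        ψ xB ∈ Submodule.span ℚ ({xA, yA} : Set CohomSum) ∧
        ψ yB ∈ Submodule.span ℚ ({xA, yA} : Set CohomSum)) := by
  constructor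
  · rintro ⟨ψ, hψ, hx, hy⟩
    have hprod : ψ (xA - yA) * ψ (xA + yA) = 0 := by
      rw [← map_mul, mul_comm, ← sq_sub_sq, CohomSum.xA_sq_sub_yA_sq, map_zero]
    rcases CohomDiff.eq_zero_or_eq_zero_of_mul_eq_zero (map_sub ψ xA yA ▸ sub_mem hx hy)
      (map_add ψ xA yA ▸ add_mem hx hy) hprod with h | h
    · exact CohomSum.xA_sub_yA_ne_zero ((map_eq_zero_iff ψ hψ).1 h)
    · exact CohomSum.xA_add_yA_ne_zero ((map_eq_zero_iff ψ hψ).1 h)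
  · rintro ⟨ψ, hψ, hx, hy⟩
    have hsq : ψ xB ^ 2 + ψ yB ^ 2 = 0 := by
      rw [← map_pow, ← map_pow, ← map_add, CohomDiff.xB_sq_add_yB_sq, map_zero]
    exact CohomDiff.xB_ne_zero <|
      (map_eq_zero_iff ψ hψ).1 (CohomSum.eq_zero_of_sq_add_sq_eq_zero hx hy hsq)
end

section
/- Let Δ be a group and Δ' a finite-index subgroup of Δ. Then Δ is presentable by a product if and only if Δ' is presentable by a product. -/
universe u

/-- A presentation of the group `Δ` by a product: a homomorphism
`φ : Γ₁ × Γ₂ → Δ` such that the images of the two factors are infinite and generate a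
subgroup of finite index of `Δ`. -/
structure ProductPresentation (Δ : Type u) [Group Δ] where
  Γ₁ : Type u
  Γ₂ : Type u
  [grp₁ : Group Γ₁]
  [grp₂ : Group Γ₂]
  φ : Γ₁ × Γ₂ →* Δ
  infinite₁ : Infinite ((φ.comp (MonoidHom.inl Γ₁ Γ₂)).range)
  infinite₂ : Infinite ((φ.comp (MonoidHom.inr Γ₁ Γ₂)).range)
  finiteIndex : ((φ.comp (MonoidHom.inl Γ₁ Γ₂)).range ⊔
      (φ.comp (MonoidHom.inr Γ₁ Γ₂)).range).FiniteIndex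

/-- A group is *presentable by a product* if it admits a presentation by a product
(Kotschick–Löh). -/
def PresentableByProduct (Δ : Type u) [Group Δ] : Prop :=
  Nonempty (ProductPresentation Δ)

/-! Being presentable by a product amounts to containing two infinite, elementwise commuting
subgroups `H`, `K` such that `H ⊔ K` has finite index. Such a pair in `Δ'` is also one in `Δ`.
Conversely, a pair in `Δ` is cut down to `H ⊓ Δ'`, `K ⊓ Δ'`: these are still infinite, having
finite index in `H` and `K`; and since `H` and `K` commute, multiplication `H × K → H ⊔ K` is a
homomorphism with finite-index image, which maps the finite-index subgroup `(H ⊓ Δ') × (K ⊓ Δ')`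
onto a finite-index subgroup of `H ⊔ K` inside `(H ⊓ Δ') ⊔ (K ⊓ Δ')`. -/

namespace Subgroup

variable {G G' : Type*} [Group G] [Group G']

theorem infinite_of_finiteIndex [Infinite G] (H : Subgroup G) [H.FiniteIndex] : Infinite H := by
  refine not_finite_iff_infinite.1 fun hfin ↦ ?_
  have := (finite_iff_finite_and_finiteIndex H).2 ⟨hfin, ‹_›⟩
  exact not_finite G

theorem infinite_subgroupOf (H N : Subgroup G) [Infinite H] [N.FiniteIndex] :
    Infinite (H.subgroupOf N) :=
  have := (N.subgroupOf H).infinite_of_finiteIndex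
  Infinite.of_injective (fun x : N.subgroupOf H ↦ (⟨⟨x.1.1, x.2⟩, x.1.2⟩ : H.subgroupOf N))
    fun _ _ hxy ↦ Subtype.ext (Subtype.ext (congrArg (fun y ↦ y.1.1) hxy :))

theorem finiteIndex_map_subtype_iff {N : Subgroup G} [N.FiniteIndex] (K : Subgroup N) :
    (K.map N.subtype).FiniteIndex ↔ K.FiniteIndex := by
  rw [finiteIndex_iff, finiteIndex_iff, index_map_subtype, mul_ne_zero_iff,
    and_iff_left FiniteIndex.index_ne_zero]

theorem finiteIndex_map (f : G →* G') [f.range.FiniteIndex] (S : Subgroup G) [S.FiniteIndex] :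
    (S.map f).FiniteIndex := by
  rw [finiteIndex_iff, index_map]
  have : (S ⊔ f.ker).FiniteIndex := finiteIndex_of_le le_sup_left
  exact mul_ne_zero index_ne_zero_of_finite index_ne_zero_of_finite

theorem finiteIndex_inf_sup_inf {H K N : Subgroup G} (hHK : ∀ x ∈ H, ∀ y ∈ K, Commute x y)
    [(H ⊔ K).FiniteIndex] [N.FiniteIndex] : ((H ⊓ N) ⊔ (K ⊓ N)).FiniteIndex := by
  -- stated through `subtype` so that the `noncommCoprod` lemmas can rewrite `μ`
  let μ : H × K →* G := H.subtype.noncommCoprod K.subtype fun x y ↦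
    show Commute (H.subtype x) (K.subtype y) from hHK x x.2 y y.2
  have : μ.range.FiniteIndex := by
    rwa [show μ.range = H ⊔ K by simp only [μ, MonoidHom.noncommCoprod_range, range_subtype]]
  have : ((N.subgroupOf H).prod (N.subgroupOf K)).FiniteIndex := by
    rw [finiteIndex_iff, index_prod]
    exact mul_ne_zero FiniteIndex.index_ne_zero FiniteIndex.index_ne_zero
  have hle : ((N.subgroupOf H).prod (N.subgroupOf K)).map μ ≤ (H ⊓ N) ⊔ (K ⊓ N) := by
    rintro _ ⟨⟨x, y⟩, ⟨hx, hy⟩, rfl⟩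
    exact mul_mem (mem_sup_left ⟨x.2, hx⟩) (mem_sup_right ⟨y.2, hy⟩)
  have := finiteIndex_map μ ((N.subgroupOf H).prod (N.subgroupOf K))
  exact finiteIndex_of_le hle

end Subgroup

open Subgroup

theorem presentableByProduct_iff_exists_commuting_subgroups {Δ : Type u} [Group Δ] :
    PresentableByProduct Δ ↔ ∃ H K : Subgroup Δ, Infinite H ∧ Infinite K ∧
      (∀ x ∈ H, ∀ y ∈ K, Commute x y) ∧ (H ⊔ K).FiniteIndex := by
  constructor
  · rintro ⟨P⟩
    let := P.grp₁
    let := P.grp₂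
    refine ⟨_, _, P.infinite₁, P.infinite₂, ?_, P.finiteIndex⟩
    rintro _ ⟨a, rfl⟩ _ ⟨b, rfl⟩
    exact (MonoidHom.commute_inl_inr a b).map P.φ
  · rintro ⟨H, K, hH, hK, hHK, hfi⟩
    refine ⟨⟨H, K, H.subtype.noncommCoprod K.subtype fun x y ↦
      show Commute (H.subtype x) (K.subtype y) from hHK x x.2 y y.2, ?_, ?_, ?_⟩⟩
    · rwa [MonoidHom.noncommCoprod_comp_inl, range_subtype]
    · rwa [MonoidHom.noncommCoprod_comp_inr, range_subtype]
    · rwa [MonoidHom.noncommCoprod_comp_inl, MonoidHom.noncommCoprod_comp_inr, range_subtype,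
        range_subtype]

/-- If `Δ'` is a finite-index subgroup of `Δ`, then `Δ` is presentable by a product if
and only if `Δ'` is presentable by a product. -/
theorem presentableByProduct_iff_finiteIndex_subgroup (Δ : Type u) [Group Δ]
    (Δ' : Subgroup Δ) (h : Δ'.FiniteIndex) :
    PresentableByProduct Δ ↔ PresentableByProduct Δ' := by
  simp only [presentableByProduct_iff_exists_commuting_subgroups]
  constructor
  · rintro ⟨H, K, hH, hK, hHK, hfi⟩
    refine ⟨H.subgroupOf Δ', K.subgroupOf Δ', infinite_subgroupOf H Δ', infinite_subgroupOf K Δ',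
      fun x hx y hy ↦ Subtype.ext (hHK x hx y hy), ?_⟩
    rw [← finiteIndex_map_subtype_iff, Subgroup.map_sup, subgroupOf_map_subtype,
      subgroupOf_map_subtype]
    exact finiteIndex_inf_sup_inf hHK
  · rintro ⟨H, K, hH, hK, hHK, hfi⟩
    refine ⟨H.map Δ'.subtype, K.map Δ'.subtype,
      (H.equivMapOfInjective _ Δ'.subtype_injective).toEquiv.infinite_iff.1 hH,
      (K.equivMapOfInjective _ Δ'.subtype_injective).toEquiv.infinite_iff.1 hK, ?_, ?_⟩
    · rintro _ ⟨x, hx, rfl⟩ _ ⟨y, hy, rfl⟩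
      exact (hHK x hx y hy).map Δ'.subtype
    · rwa [← Subgroup.map_sup, finiteIndex_map_subtype_iff]
end

section
/- An infinite simple group is not presentable by a product. -/
/-!
The images `Δ₁, Δ₂` of the two factors centralize each other and, since an infinite simple group
has no proper subgroup of finite index, they generate `Δ`. Hence `Δ₁` is normalized by `Δ₁` and by
`Δ₂`, so it is normal, and being infinite it is all of `Δ`. Then `Δ₂` lies in the centre, which is
therefore a nontrivial normal subgroup, hence all of `Δ`. But an abelian simple group is cyclic of
prime order, so it is finite.
-/

universe u

namespace MonoidHom

variable {M N G : Type*} [Group M] [Group N] [Group G]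

theorem range_comp_inr_le_centralizer_range_comp_inl (f : M × N →* G) :
    (f.comp (inr M N)).range ≤ Subgroup.centralizer (f.comp (inl M N)).range := by
  rintro _ ⟨n, rfl⟩ _ ⟨m, rfl⟩
  exact ((commute_inl_inr m n).map f).eq

end MonoidHom

namespace Subgroup

variable {G : Type*} [Group G]

theorem normal_of_sup_eq_top_of_le_centralizer {K L : Subgroup G} (hKL : K ⊔ L = ⊤)
    (hL : L ≤ centralizer K) : K.Normal := by
  rw [← normalizer_eq_top_iff, eq_top_iff, ← hKL]
  exact sup_le le_normalizer (hL.trans (centralizer_le_normalizer _))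

variable [IsSimpleGroup G]

theorem eq_top_of_normal_of_infinite (H : Subgroup G) [H.Normal] [Infinite H] : H = ⊤ :=
  (IsSimpleGroup.eq_bot_or_eq_top_of_normal H ‹_›).resolve_left fun hH ↦ by
    subst hH; exact not_finite (⊥ : Subgroup G)

theorem eq_top_of_finiteIndex [Infinite G] (H : Subgroup G) [H.FiniteIndex] : H = ⊤ := by
  have hcore : H.normalCore = ⊤ :=
    (IsSimpleGroup.eq_bot_or_eq_top_of_normal _ (normalCore_normal H)).resolve_left fun hbot ↦
      (finiteIndex_normalCore H).index_ne_zero (by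
        rw [hbot, index_bot, Nat.card_eq_zero_of_infinite])
  exact top_le_iff.mp (hcore ▸ normalCore_le H)

end Subgroup

theorem IsSimpleGroup.not_isMulCommutative_of_infinite (G : Type*) [Group G] [IsSimpleGroup G]
    [Infinite G] : ¬ IsMulCommutative G := fun _ ↦ by
  let : CommGroup G := { mul_comm := mul_comm' }
  simpa [Nat.card_eq_zero_of_infinite, Nat.not_prime_zero] using IsSimpleGroup.prime_card (α := G)

/-- An infinite simple group is not presentable by a product. -/
theorem not_presentableByProduct_of_infinite_simple (Δ : Type u) [Group Δ]
    [Infinite Δ] (h : IsSimpleGroup Δ) :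
    ¬ PresentableByProduct Δ := by
  rintro ⟨⟨Γ₁, Γ₂, φ, _, _, _⟩⟩
  set Δ₁ := (φ.comp (MonoidHom.inl Γ₁ Γ₂)).range
  set Δ₂ := (φ.comp (MonoidHom.inr Γ₁ Γ₂)).range
  have hcomm : Δ₂ ≤ Subgroup.centralizer Δ₁ := φ.range_comp_inr_le_centralizer_range_comp_inl
  have : Δ₁.Normal := Subgroup.normal_of_sup_eq_top_of_le_centralizer
    (Subgroup.eq_top_of_finiteIndex _) hcomm
  have hcenter : Δ₂ ≤ Subgroup.center Δ := by
    rwa [Subgroup.eq_top_of_normal_of_infinite Δ₁, Subgroup.coe_top,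
      Subgroup.centralizer_univ] at hcomm
  have : Infinite (Subgroup.center Δ) :=
    Infinite.of_injective _ (Subgroup.inclusion_injective hcenter)
  exact IsSimpleGroup.not_isMulCommutative_of_infinite Δ
    (Subgroup.center_eq_top_iff.mp (Subgroup.eq_top_of_normal_of_infinite _))
end
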